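/- arXiv:1410.0347 — 2 statements merged into one kernel-verified Lean document; each statement's English description precedes it below -/
import Mathlib

section
/- Kullback–Leibler divergence between centered Gaussians with comparable covariances: let H² be positive definite and 0 ⪯ B² ⪯ δ² H² with δ² ≤ 1/2, set Σ₁ = H² − B² and Σ₂ = H². Then KL(N(0,Σ₁), N(0,Σ₂)) ≤ p · ‖H^{-1} B² H^{-1}‖²/2 · c for an explicit constant c; in particular if ‖H^{-1} B² H^{-1}‖ ≤ δ² ≤ 1/2 then KL(N(0,Σ₁), N(0,Σ₂)) ≤ p δ⁴. -/
/-!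
Whitening by `C = √(H²)` turns `Σ₂⁻¹Σ₁` into the symmetric matrix `M = C⁻¹ Σ₁ C⁻¹`, with the same
trace (by cyclicity) and determinant, and conjugating the Loewner bounds `(1 - δ²) H² ⪯ Σ₁ ⪯ H²`
gives `(1 - δ²) I ⪯ M ⪯ I`. So `2 KL = ∑ᵢ (λᵢ - 1 - log λᵢ)` over eigenvalues `λᵢ ∈ [1 - δ², 1]`
of `M`, and `log λ ≥ 1 - 1/λ` bounds each term by `(λᵢ - 1)² / λᵢ ≤ 2 δ⁴` because `λᵢ ≥ 1/2`.
-/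

open Matrix
open scoped MatrixOrder ComplexOrder

namespace Real

theorem sub_one_sub_log_le_sq_div {y : ℝ} (hy : 0 < y) : y - 1 - log y ≤ (y - 1) ^ 2 / y := by
  have hlog := one_sub_inv_le_log_of_pos hy
  have hsq : (y - 1) ^ 2 / y = y - 2 + y⁻¹ := by field_simp; ring
  linarith

theorem sub_one_sub_log_le_of_mem_Icc {y d : ℝ} (hd : d ≤ 1 / 2) (hy : y ∈ Set.Icc (1 - d) 1) :
    y - 1 - log y ≤ 2 * d ^ 2 := by
  obtain ⟨hlo, hhi⟩ := hy
  calc y - 1 - log y ≤ (y - 1) ^ 2 / y := sub_one_sub_log_le_sq_div (by linarith)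
    _ ≤ 2 * (y - 1) ^ 2 := by
      rw [div_le_iff₀ (by linarith)]
      nlinarith [sq_nonneg (y - 1)]
    _ ≤ 2 * d ^ 2 := by nlinarith

end Real

namespace Matrix

variable {n : Type*} [Fintype n] [DecidableEq n]

section CommRing

variable {R : Type*} [CommRing R] {A C : Matrix n n R}

theorem trace_inv_mul_eq_of_mul_self_eq (hC : C * C = A) (X : Matrix n n R) :
    (A⁻¹ * X).trace = (C⁻¹ * X * C⁻¹).trace := by
  rw [← hC, mul_inv_rev, mul_assoc, trace_mul_comm]

theorem det_inv_mul_eq_of_mul_self_eq (hC : C * C = A) (X : Matrix n n R) :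
    (A⁻¹ * X).det = (C⁻¹ * X * C⁻¹).det := by
  simp only [← hC, mul_inv_rev, det_mul]
  ring

end CommRing

theorem IsHermitian.trace_sub_card_sub_log_det {M : Matrix n n ℝ} (hM : M.IsHermitian)
    (hne : ∀ i, hM.eigenvalues i ≠ 0) :
    M.trace - Fintype.card n - Real.log M.det
      = ∑ i, (hM.eigenvalues i - 1 - Real.log (hM.eigenvalues i)) := by
  rw [hM.trace_eq_sum_eigenvalues, hM.det_eq_prod_eigenvalues]
  simp only [RCLike.ofReal_real_eq_id, id, Real.log_prod (fun i _ => hne i),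
    Finset.sum_sub_distrib, Finset.sum_const, Finset.card_univ, nsmul_eq_mul, mul_one]

variable {𝕜 : Type*} [RCLike 𝕜]

theorem IsHermitian.eigenvalues_mem_Icc {M : Matrix n n 𝕜} (hM : M.IsHermitian) {a b : ℝ}
    (ha : a • (1 : Matrix n n 𝕜) ≤ M) (hb : M ≤ b • 1) (i : n) :
    hM.eigenvalues i ∈ Set.Icc a b := by
  rw [← Algebra.algebraMap_eq_smul_one] at ha hb
  exact ⟨(algebraMap_le_iff_le_spectrum hM.isSelfAdjoint).mp ha _
      (hM.eigenvalues_mem_spectrum_real i),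
    (le_algebraMap_iff_spectrum_le hM.isSelfAdjoint).mp hb _
      (hM.eigenvalues_mem_spectrum_real i)⟩

theorem PosDef.inv_sqrt_mul_smul_mul_inv_sqrt {A : Matrix n n 𝕜} (hA : A.PosDef) (r : ℝ) :
    (CFC.sqrt A)⁻¹ * (r • A) * (CFC.sqrt A)⁻¹ = r • 1 := by
  have hdet : IsUnit (CFC.sqrt A).det :=
    (isUnit_iff_isUnit_det _).mp hA.isStrictlyPositive.isUnit_cfcSqrt
  rw [Matrix.mul_smul, Matrix.smul_mul]
  nth_rw 2 [← CFC.sqrt_mul_sqrt_self A hA.posSemidef.nonneg]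
  rw [mul_assoc, mul_assoc, mul_nonsing_inv _ hdet, mul_one, nonsing_inv_mul _ hdet]

theorem isSelfAdjoint_inv_sqrt (A : Matrix n n 𝕜) : IsSelfAdjoint (CFC.sqrt A)⁻¹ :=
  (CFC.sqrt_nonneg A).posSemidef.isHermitian.inv

theorem PosDef.smul_one_le_inv_sqrt_mul_mul_inv_sqrt {A X : Matrix n n 𝕜} (hA : A.PosDef)
    {a : ℝ} (h : a • A ≤ X) : a • 1 ≤ (CFC.sqrt A)⁻¹ * X * (CFC.sqrt A)⁻¹ := by
  rw [← hA.inv_sqrt_mul_smul_mul_inv_sqrt]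
  exact (isSelfAdjoint_inv_sqrt A).conjugate_le_conjugate h

theorem PosDef.inv_sqrt_mul_mul_inv_sqrt_le_smul_one {A X : Matrix n n 𝕜} (hA : A.PosDef)
    {b : ℝ} (h : X ≤ b • A) : (CFC.sqrt A)⁻¹ * X * (CFC.sqrt A)⁻¹ ≤ b • 1 := by
  rw [← hA.inv_sqrt_mul_smul_mul_inv_sqrt]
  exact (isSelfAdjoint_inv_sqrt A).conjugate_le_conjugate h

end Matrix

theorem gaussian_kl_bound_comparable_covariances_general
    {p : ℕ} (H2 B2 : Matrix (Fin p) (Fin p) ℝ)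
    (hH2 : H2.PosDef) (hB2 : B2.PosSemidef)
    (δ2 : ℝ) (hδ2 : δ2 ≤ 1 / 2)
    (hLoewner : (δ2 • H2 - B2).PosSemidef)
    (S1 S2 : Matrix (Fin p) (Fin p) ℝ) (hS1 : S1 = H2 - B2) (hS2 : S2 = H2)
    (KL : ℝ)
    (hKL : KL = (1 / 2) * ((S2⁻¹ * S1).trace - p - Real.log (S2⁻¹ * S1).det)) :
    KL ≤ p * δ2 ^ 2 := by
  rw [hKL, hS1, hS2]
  set C := CFC.sqrt H2
  have hC : C * C = H2 := CFC.sqrt_mul_sqrt_self H2 hH2.posSemidef.nonneg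
  set M := C⁻¹ * (H2 - B2) * C⁻¹
  have hM : M.IsHermitian := (hH2.posSemidef.isHermitian.sub hB2.isHermitian).isSelfAdjoint
    |>.conjugate_self (isSelfAdjoint_inv_sqrt H2)
  have hM_le : M ≤ (1 : ℝ) • 1 := hH2.inv_sqrt_mul_mul_inv_sqrt_le_smul_one <| by
    rw [one_smul]
    exact sub_le_self _ hB2.nonneg
  have hM_ge : (1 - δ2) • 1 ≤ M := hH2.smul_one_le_inv_sqrt_mul_mul_inv_sqrt <| by
    rw [sub_smul, one_smul]
    exact sub_le_sub_left (sub_nonneg.mp hLoewner.nonneg) _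
  have heig := hM.eigenvalues_mem_Icc hM_ge hM_le
  have hsum := hM.trace_sub_card_sub_log_det (fun i => by linarith [(heig i).1])
  have hbound := Finset.sum_le_card_nsmul Finset.univ _ _
    (fun i _ => Real.sub_one_sub_log_le_of_mem_Icc hδ2 (heig i))
  simp only [Finset.card_univ, Fintype.card_fin, nsmul_eq_mul] at hsum hbound
  rw [trace_inv_mul_eq_of_mul_self_eq hC, det_inv_mul_eq_of_mul_self_eq hC, hsum]
  linarith

/-- KL divergence between centered Gaussians with comparable covariances: if `H²` is positive
definite, `0 ⪯ B² ⪯ δ² H²` with `δ² ≤ 1/2`, `Σ₁ = H² - B²`, `Σ₂ = H²`, then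
`KL(N(0,Σ₁), N(0,Σ₂)) = ½(tr(Σ₂⁻¹Σ₁) - p - log det(Σ₂⁻¹Σ₁)) ≤ p δ⁴`. -/
theorem gaussian_kl_bound_comparable_covariances
    {p : ℕ} (H2 B2 : Matrix (Fin p) (Fin p) ℝ)
    (hH2 : H2.PosDef) (hB2 : B2.PosSemidef)
    (δ2 : ℝ) (hδ2nn : 0 ≤ δ2) (hδ2 : δ2 ≤ 1 / 2)
    (hLoewner : (δ2 • H2 - B2).PosSemidef)
    (S1 S2 : Matrix (Fin p) (Fin p) ℝ) (hS1 : S1 = H2 - B2) (hS2 : S2 = H2)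
    (KL : ℝ)
    (hKL : KL = (1 / 2) * ((S2⁻¹ * S1).trace - p - Real.log (S2⁻¹ * S1).det)) :
    KL ≤ p * δ2 ^ 2 :=
  gaussian_kl_bound_comparable_covariances_general H2 B2 hH2 hB2 δ2 hδ2 hLoewner S1 S2 hS1 hS2 KL
    hKL
end

section
/- GLM modelling bias bound: let Y_1,…,Y_n be independent real random variables with Var Y_i > 0, let Ψ_i ∈ ℝ^p and d : ℝ → ℝ with derivative d′. Define H² := Σ_i E[(Y_i − d′(Ψ_i^T θ*))²] Ψ_i Ψ_i^T and B² := Σ_i (E Y_i − d′(Ψ_i^T θ*))² Ψ_i Ψ_i^T, assuming H² is positive definite. Then ‖H^{-1} B² H^{-1}‖ ≤ 1 − min_{1≤i≤n} Var Y_i / (Var Y_i + (E Y_i − d′(Ψ_i^T θ*))²) < 1. -/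
/-! With `aᵢ = E(Yᵢ - d'ᵢ)²` and `bᵢ = (E Yᵢ - d'ᵢ)²` one has `aᵢ = Var Yᵢ + bᵢ`, hence
`bᵢ ≤ c aᵢ` for `c = 1 - minᵢ Var Yᵢ / aᵢ < 1`. Summing against the rank-one matrices `ΨᵢΨᵢᵀ`
gives `0 ≤ B² ≤ c H²` in the Loewner order; conjugating by `H⁻¹ = (H²)^{-1/2}` gives
`0 ≤ H⁻¹B²H⁻¹ ≤ c`, and for a positive semidefinite matrix the spectral norm is the largest
eigenvalue. -/

open MeasureTheory Matrix ProbabilityTheory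
open scoped Matrix.Norms.L2Operator MatrixOrder

theorem norm_le_of_nonneg_of_le_algebraMap {A : Type*} [NormedRing A] [StarRing A]
    [NormedAlgebra ℝ A] [PartialOrder A] [StarOrderedRing A]
    [IsometricContinuousFunctionalCalculus ℝ A IsSelfAdjoint] [NonnegSpectrumClass ℝ A]
    {a : A} {r : ℝ} (hr : 0 ≤ r) (ha : 0 ≤ a) (har : a ≤ algebraMap ℝ A r) : ‖a‖ ≤ r := by
  rw [← cfc_id ℝ a]
  refine norm_cfc_le hr fun x hx => ?_
  rw [id, Real.norm_of_nonneg (spectrum_nonneg_of_nonneg ha hx)]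
  exact (le_algebraMap_iff_spectrum_le (IsSelfAdjoint.of_nonneg ha)).mp har x hx

theorem integral_sub_const_sq_eq_variance_add {Ω : Type*} [MeasurableSpace Ω] {μ : Measure Ω}
    [IsProbabilityMeasure μ] {X : Ω → ℝ} (hX : MemLp X 2 μ) (t : ℝ) :
    ∫ ω, (X ω - t) ^ 2 ∂μ = Var[X; μ] + (μ[X] - t) ^ 2 := by
  have hXt : MemLp (fun ω => X ω - t) 2 μ := hX.sub (memLp_const t)
  rw [← variance_sub_const hX.aestronglyMeasurable t, variance_eq_sub hXt,
    integral_sub (hX.integrable one_le_two) (integrable_const t)]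
  simp

namespace Matrix

variable {ι n : Type*} [Fintype ι] [Fintype n]

theorem sum_smul_vecMulVec_mono {a b : ι → ℝ} (hab : ∀ i, b i ≤ a i) (Ψ : ι → n → ℝ) :
    ∑ i, b i • vecMulVec (Ψ i) (Ψ i) ≤ ∑ i, a i • vecMulVec (Ψ i) (Ψ i) := by
  refine Finset.sum_le_sum fun i _ => ?_
  rw [le_iff, ← sub_smul]
  simpa using (posSemidef_vecMulVec_self_star (Ψ i)).smul (sub_nonneg.mpr (hab i))

theorem PosSemidef.sqrt_eq_spectral [DecidableEq n] {A : Matrix n n ℝ} (hA : A.PosSemidef) :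
    CFC.sqrt A = (hA.1.eigenvectorUnitary : Matrix n n ℝ) *
      diagonal (Real.sqrt ∘ hA.1.eigenvalues) * (star hA.1.eigenvectorUnitary : Matrix n n ℝ) := by
  rw [CFC.sqrt_eq_real_sqrt A hA.nonneg, cfcₙ_eq_cfc, hA.1.cfc_eq, IsHermitian.cfc,
    Unitary.conjStarAlgAut_apply]
  rfl

theorem l2_opNorm_inv_mul_mul_inv_le [DecidableEq n] {H B : Matrix n n ℝ} {c : ℝ} (hc : 0 ≤ c)
    (hH : IsSelfAdjoint H) (hHu : IsUnit H) (hB : 0 ≤ B) (hBH : B ≤ c • (H * H)) :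
    ‖H⁻¹ * B * H⁻¹‖ ≤ c := by
  have hdet : IsUnit H.det := (isUnit_iff_isUnit_det H).mp hHu
  have hHinv : IsSelfAdjoint H⁻¹ := by
    rw [IsSelfAdjoint, star_eq_conjTranspose, conjTranspose_nonsing_inv, ← star_eq_conjTranspose,
      hH.star_eq]
  refine norm_le_of_nonneg_of_le_algebraMap hc (hHinv.conjugate_nonneg hB) ?_
  calc H⁻¹ * B * H⁻¹ ≤ H⁻¹ * (c • (H * H)) * H⁻¹ := hHinv.conjugate_le_conjugate hBH
    _ = algebraMap ℝ _ c := by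
      rw [mul_smul_comm, smul_mul_assoc, ← Matrix.mul_assoc, nonsing_inv_mul _ hdet,
        Matrix.one_mul, mul_nonsing_inv _ hdet, Algebra.algebraMap_eq_smul_one]

end Matrix

section
variable {ι : Type*} [Finite ι] {v b : ι → ℝ}

theorem le_one_sub_ciInf_div_add_mul (hvb : ∀ i, 0 < v i + b i) (i : ι) :
    b i ≤ (1 - ⨅ j, v j / (v j + b j)) * (v i + b i) := by
  have hinf : ⨅ j, v j / (v j + b j) ≤ v i / (v i + b i) :=
    ciInf_le (Set.finite_range _).bddBelow i
  calc b i = (1 - v i / (v i + b i)) * (v i + b i) := by field_simp [(hvb i).ne']; ring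
    _ ≤ (1 - ⨅ j, v j / (v j + b j)) * (v i + b i) := by gcongr; exact (hvb i).le

theorem one_sub_ciInf_div_add_mem_Ico [Nonempty ι] (hv : ∀ i, 0 < v i) (hb : ∀ i, 0 ≤ b i) :
    1 - ⨅ j, v j / (v j + b j) ∈ Set.Ico 0 1 := by
  obtain ⟨i, hi⟩ := exists_eq_ciInf_of_finite (f := fun j => v j / (v j + b j))
  have hvb : 0 < v i + b i := add_pos_of_pos_of_nonneg (hv i) (hb i)
  rw [← hi]
  exact ⟨sub_nonneg.mpr ((div_le_one hvb).mpr (le_add_of_nonneg_right (hb i))),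
    sub_lt_self 1 (div_pos (hv i) hvb)⟩

end

theorem glm_modelling_bias_bound_general
    {Ω : Type*} [MeasurableSpace Ω] (μ : Measure Ω) [IsProbabilityMeasure μ]
    (n p : ℕ) (hn : 0 < n)
    (Y : Fin n → Ω → ℝ)
    (hL2 : ∀ i, MemLp (Y i) 2 μ)
    (hvar : ∀ i, 0 < variance (Y i) μ)
    (Ψ : Fin n → Fin p → ℝ) (d' : ℝ → ℝ) (θ : Fin p → ℝ)
    (H2 B2 : Matrix (Fin p) (Fin p) ℝ)
    (hH2 : H2 = ∑ i, (∫ ω, (Y i ω - d' (Ψ i ⬝ᵥ θ)) ^ 2 ∂μ) • vecMulVec (Ψ i) (Ψ i))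
    (hB2 : B2 = ∑ i, ((∫ ω, Y i ω ∂μ) - d' (Ψ i ⬝ᵥ θ)) ^ 2 • vecMulVec (Ψ i) (Ψ i))
    (hH2pd : H2.PosDef)
    (H : Matrix (Fin p) (Fin p) ℝ) (hH : H = (hH2pd.posSemidef.1.eigenvectorUnitary : Matrix (Fin p) (Fin p) ℝ) *
      diagonal (Real.sqrt ∘ hH2pd.posSemidef.1.eigenvalues) *
      (star hH2pd.posSemidef.1.eigenvectorUnitary : Matrix (Fin p) (Fin p) ℝ)) :
    ‖H⁻¹ * B2 * H⁻¹‖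
        ≤ 1 - ⨅ i, variance (Y i) μ /
            (variance (Y i) μ + ((∫ ω, Y i ω ∂μ) - d' (Ψ i ⬝ᵥ θ)) ^ 2) ∧
    1 - ⨅ i, variance (Y i) μ /
        (variance (Y i) μ + ((∫ ω, Y i ω ∂μ) - d' (Ψ i ⬝ᵥ θ)) ^ 2) < 1 := by
  have : Nonempty (Fin n) := Fin.pos_iff_nonempty.mp hn
  have hbias : ∀ i, 0 ≤ ((∫ ω, Y i ω ∂μ) - d' (Ψ i ⬝ᵥ θ)) ^ 2 := fun i => sq_nonneg _
  have hc := one_sub_ciInf_div_add_mem_Ico hvar hbias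
  refine ⟨?_, hc.2⟩
  have hsqrt : H = CFC.sqrt H2 := hH.trans hH2pd.posSemidef.sqrt_eq_spectral.symm
  have hHH : H * H = H2 := hsqrt ▸ CFC.sqrt_mul_sqrt_self H2 hH2pd.posSemidef.nonneg
  refine l2_opNorm_inv_mul_mul_inv_le hc.1 (hsqrt ▸ IsSelfAdjoint.of_nonneg (CFC.sqrt_nonneg H2))
    (isUnit_of_mul_isUnit_left (hHH ▸ hH2pd.isUnit)) ?_ ?_
  · simpa [hB2] using sum_smul_vecMulVec_mono (b := 0) hbias Ψ
  · rw [hHH, hH2, Finset.smul_sum, hB2]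
    simp only [smul_smul]
    refine sum_smul_vecMulVec_mono (fun i => ?_) Ψ
    rw [integral_sub_const_sq_eq_variance_add (hL2 i)]
    exact le_one_sub_ciInf_div_add_mul (fun j => add_pos_of_pos_of_nonneg (hvar j) (hbias j)) i

/-- GLM modelling bias bound: with `H² = ∑ E[(Yᵢ - d'(Ψᵢᵀθ*))²] ΨᵢΨᵢᵀ` positive definite and
`B² = ∑ (E Yᵢ - d'(Ψᵢᵀθ*))² ΨᵢΨᵢᵀ`, the spectral norm of `H⁻¹B²H⁻¹` (with `H = (H²)^{1/2}`)
is at most `1 - minᵢ Var Yᵢ/(Var Yᵢ + (E Yᵢ - d'(Ψᵢᵀθ*))²)`, which is strictly less than 1. -/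
theorem glm_modelling_bias_bound
    {Ω : Type*} [MeasurableSpace Ω] (μ : Measure Ω) [IsProbabilityMeasure μ]
    (n p : ℕ) (hn : 0 < n)
    (Y : Fin n → Ω → ℝ) (hmeas : ∀ i, Measurable (Y i))
    (hL2 : ∀ i, MemLp (Y i) 2 μ)
    (hvar : ∀ i, 0 < variance (Y i) μ)
    (Ψ : Fin n → Fin p → ℝ) (d' : ℝ → ℝ) (θ : Fin p → ℝ)
    (H2 B2 : Matrix (Fin p) (Fin p) ℝ)
    (hH2 : H2 = ∑ i, (∫ ω, (Y i ω - d' (Ψ i ⬝ᵥ θ)) ^ 2 ∂μ) • vecMulVec (Ψ i) (Ψ i))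
    (hB2 : B2 = ∑ i, ((∫ ω, Y i ω ∂μ) - d' (Ψ i ⬝ᵥ θ)) ^ 2 • vecMulVec (Ψ i) (Ψ i))
    (hH2pd : H2.PosDef)
    (H : Matrix (Fin p) (Fin p) ℝ) (hH : H = (hH2pd.posSemidef.1.eigenvectorUnitary : Matrix (Fin p) (Fin p) ℝ) *
      diagonal (Real.sqrt ∘ hH2pd.posSemidef.1.eigenvalues) *
      (star hH2pd.posSemidef.1.eigenvectorUnitary : Matrix (Fin p) (Fin p) ℝ)) :
    ‖H⁻¹ * B2 * H⁻¹‖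
        ≤ 1 - ⨅ i, variance (Y i) μ /
            (variance (Y i) μ + ((∫ ω, Y i ω ∂μ) - d' (Ψ i ⬝ᵥ θ)) ^ 2) ∧
    1 - ⨅ i, variance (Y i) μ /
        (variance (Y i) μ + ((∫ ω, Y i ω ∂μ) - d' (Ψ i ⬝ᵥ θ)) ^ 2) < 1 :=
  glm_modelling_bias_bound_general μ n p hn Y hL2 hvar Ψ d' θ H2 B2 hH2 hB2 hH2pd H hH
end
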